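/- arXiv:1010.0600 — 4 statements merged into one kernel-verified Lean document; each statement's English description precedes it below -/
import Mathlib

section
/- Let A ⊆ B(H) be a unital C*-algebra with cyclic vector ξ and state φ = ⟨·ξ, ξ⟩. For a ∈ A_φ, u a unitary in A_φ, and b, c ∈ A one has ⟨(ba)ξ, cξ⟩ = ⟨bξ, (ca*)ξ⟩; in particular the map bξ ↦ (bu)ξ extends to a unitary operator on H. -/
/-!
In the vector state `φ = ⟨·ξ, ξ⟩`, an element `a` of the centralizer can be moved cyclically:
`⟨(ba)ξ, cξ⟩ = φ(c*ba) = φ(ac*b) = ⟨bξ, (ca*)ξ⟩`. Taking `c = bu` for a unitary `u` gives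
`‖(bu)ξ‖ = ‖bξ‖`, so right multiplication by `u`, a bijection of `A`, induces an isometry of the
dense subspace `Aξ` onto itself, which extends to a unitary operator on `H`.
-/

open scoped InnerProductSpace

section

variable {H : Type*} [NormedAddCommGroup H] [InnerProductSpace ℂ H] [CompleteSpace H]

theorem inner_apply_eq_inner_star_mul_apply (x y : H →L[ℂ] H) (ξ : H) :
    ⟪x ξ, y ξ⟫_ℂ = ⟪(star y * x) ξ, ξ⟫_ℂ := by
  rw [mul_apply_eq_comp, ContinuousLinearMap.star_eq_adjoint,
    ContinuousLinearMap.adjoint_inner_left]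

section Centralizer

variable {A : StarSubalgebra ℂ (H →L[ℂ] H)} {ξ : H} {a b c : H →L[ℂ] H}

theorem inner_mul_apply_eq_inner_mul_star_apply
    (ha : ∀ d ∈ A, ⟪(a * d) ξ, ξ⟫_ℂ = ⟪(d * a) ξ, ξ⟫_ℂ) (hb : b ∈ A) (hc : c ∈ A) :
    ⟪(b * a) ξ, c ξ⟫_ℂ = ⟪b ξ, (c * star a) ξ⟫_ℂ := by
  rw [inner_apply_eq_inner_star_mul_apply, inner_apply_eq_inner_star_mul_apply]
  calc ⟪(star c * (b * a)) ξ, ξ⟫_ℂ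
      = ⟪(star c * b * a) ξ, ξ⟫_ℂ := by rw [mul_assoc]
    _ = ⟪(a * (star c * b)) ξ, ξ⟫_ℂ := (ha _ (mul_mem (star_mem hc) hb)).symm
    _ = ⟪(star (c * star a) * b) ξ, ξ⟫_ℂ := by rw [star_mul, star_star, mul_assoc]

theorem norm_mul_apply_eq_of_mul_star_eq_one
    (ha : ∀ d ∈ A, ⟪(a * d) ξ, ξ⟫_ℂ = ⟪(d * a) ξ, ξ⟫_ℂ) (haA : a ∈ A) (ha_star : a * star a = 1)
    (hb : b ∈ A) : ‖(b * a) ξ‖ = ‖b ξ‖ := by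
  have h := inner_mul_apply_eq_inner_mul_star_apply ha hb (mul_mem hb haA)
  rw [mul_assoc, ha_star, mul_one] at h
  rw [norm_eq_sqrt_re_inner (𝕜 := ℂ), h, ← norm_eq_sqrt_re_inner]

end Centralizer

section Unitary

variable (A : StarSubalgebra ℂ (H →L[ℂ] H)) (ξ : H)

def StarSubalgebra.applyₗ : A →ₗ[ℂ] H where
  toFun a := (a : H →L[ℂ] H) ξ
  map_add' _ _ := rfl
  map_smul' _ _ := rfl

theorem StarSubalgebra.denseRange_applyₗ (hcyc : Dense {y : H | ∃ a ∈ A, a ξ = y}) :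
    DenseRange (A.applyₗ ξ) := by
  refine hcyc.mono ?_
  rintro _ ⟨a, ha, rfl⟩
  exact ⟨⟨a, ha⟩, rfl⟩

variable {A ξ}

theorem exists_linearIsometryEquiv_apply_eq_mul_apply
    (hcyc : Dense {y : H | ∃ a ∈ A, a ξ = y}) {u : H →L[ℂ] H} (hu : u ∈ A)
    (hsu : star u * u = 1) (hus : u * star u = 1) (hnorm : ∀ b ∈ A, ‖(b * u) ξ‖ = ‖b ξ‖) :
    ∃ U : H ≃ₗᵢ[ℂ] H, ∀ b ∈ A, U (b ξ) = (b * u) ξ := by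
  let uA : Aˣ := ⟨⟨u, hu⟩, ⟨star u, star_mem hu⟩, Subtype.ext hus, Subtype.ext hsu⟩
  have hdense := A.denseRange_applyₗ ξ hcyc
  refine ⟨(uA.mulRightLinearEquiv ℂ).extendOfIsometry _ _ hdense hdense
    fun b => hnorm b b.2, fun b hb => ?_⟩
  exact LinearEquiv.extendOfIsometry_eq _ (A.applyₗ ξ) (A.applyₗ ξ) _ _ _ ⟨b, hb⟩

end Unitary

end

theorem centralizer_inner_identity_and_unitary_general
    {H : Type*} [NormedAddCommGroup H] [InnerProductSpace ℂ H] [CompleteSpace H]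
    (A : StarSubalgebra ℂ (H →L[ℂ] H)) (ξ : H)
    (hcyc : Dense {y : H | ∃ a ∈ A, a ξ = y})
    (C : Set (H →L[ℂ] H))
    (hC : C = {a : H →L[ℂ] H | a ∈ A ∧
      ∀ b ∈ A, ⟪(a * b) ξ, ξ⟫_ℂ = ⟪(b * a) ξ, ξ⟫_ℂ}) :
    (∀ a ∈ C, ∀ b ∈ A, ∀ c ∈ A,
        ⟪(b * a) ξ, c ξ⟫_ℂ = ⟪b ξ, (c * star a) ξ⟫_ℂ) ∧
    (∀ u ∈ C, star u * u = 1 → u * star u = 1 →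
        ∃ U : H ≃ₗᵢ[ℂ] H, ∀ b ∈ A, U (b ξ) = (b * u) ξ) := by
  subst hC
  refine ⟨fun a ⟨_, ha⟩ b hb c hc => inner_mul_apply_eq_inner_mul_star_apply ha hb hc, ?_⟩
  rintro u ⟨huA, hu⟩ hsu hus
  exact exists_linearIsometryEquiv_apply_eq_mul_apply hcyc huA hsu hus
    fun b hb => norm_mul_apply_eq_of_mul_star_eq_one hu huA hus hb

/-- Let `A ⊆ B(H)` be a unital C*-algebra with unit cyclic vector `ξ` and vector state
`φ = ⟨·ξ, ξ⟩`. For `a` in the centralizer `A_φ` and `b, c ∈ A` one has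
`⟨(ba)ξ, cξ⟩ = ⟨bξ, (ca*)ξ⟩`; in particular, for a unitary `u ∈ A_φ` the map
`bξ ↦ (bu)ξ` extends to a unitary operator on `H`. -/
theorem centralizer_inner_identity_and_unitary
    {H : Type*} [NormedAddCommGroup H] [InnerProductSpace ℂ H] [CompleteSpace H]
    (A : StarSubalgebra ℂ (H →L[ℂ] H)) (ξ : H) (hξ : ‖ξ‖ = 1)
    (hcyc : Dense {y : H | ∃ a ∈ A, a ξ = y})
    (C : Set (H →L[ℂ] H))
    (hC : C = {a : H →L[ℂ] H | a ∈ A ∧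
      ∀ b ∈ A, ⟪(a * b) ξ, ξ⟫_ℂ = ⟪(b * a) ξ, ξ⟫_ℂ}) :
    (∀ a ∈ C, ∀ b ∈ A, ∀ c ∈ A,
        ⟪(b * a) ξ, c ξ⟫_ℂ = ⟪b ξ, (c * star a) ξ⟫_ℂ) ∧
    (∀ u ∈ C, star u * u = 1 → u * star u = 1 →
        ∃ U : H ≃ₗᵢ[ℂ] H, ∀ b ∈ A, U (b ξ) = (b * u) ξ) :=
  centralizer_inner_identity_and_unitary_general A ξ hcyc C hC
end

section
/- Let G be a countable group acting on a metrizable compact space X, φ a state on C(X) ⋊ G with centralizer containing C(X), and let Φ = ∫⊕ φ_x dν(x) be the disintegration of the induced state on C(X) ⊗ C*(G). Then for every g ∈ G, φ_x(λ_g) = 0 for ν-almost every x not fixed by g. -/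
/-!
Fix `g` and put `h x = φ_x(λ_g)`, a bounded measurable function. Covariance
`u_g ι(f) u_g* = ι(f ∘ g⁻¹)` and the centralizer condition give
`∫ f₁ (f₂ ∘ g⁻¹) h dν = φ(ι f₁ · u_g · ι f₂) = ∫ f₁ f₂ h dν`.
If an open set `V` is disjoint from `g V`, a continuous `f` vanishing exactly off `V` satisfies
`f · (f ∘ g⁻¹) = 0`, so `∫ k f² h dν = 0` for every `k ∈ C(X)`; since `C(X)` is dense in `L²(ν)`,
`h = 0` a.e. on `V`. Countably many such `V` cover the points moved by `g`.
-/

open MeasureTheory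

/-- A state on a unital C*-algebra. -/
def IsState {A : Type*} [NormedRing A] [StarRing A] [NormedAlgebra ℂ A]
    (φ : A →ₗ[ℂ] ℂ) : Prop :=
  φ 1 = 1 ∧ ∀ a : A, ∃ r : ℝ, 0 ≤ r ∧ φ (star a * a) = r

open scoped ComplexConjugate

namespace IsState

variable {B : Type*} [NormedRing B] [StarRing B] [NormedAlgebra ℂ B] {ψ : B →ₗ[ℂ] ℂ}

lemma im_apply_star_mul_self (hψ : IsState ψ) (b : B) : (ψ (star b * b)).im = 0 := by
  obtain ⟨r, -, hr⟩ := hψ.2 b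
  rw [hr, Complex.ofReal_im]

lemma map_star [StarModule ℂ B] (hψ : IsState ψ) (a : B) : ψ (star a) = conj (ψ a) := by
  have h₁ := hψ.im_apply_star_mul_self (a + 1)
  have h₂ := hψ.im_apply_star_mul_self (a + Complex.I • 1)
  have e₁ : star (a + 1) * (a + 1) = star a * a + star a + a + 1 := by
    rw [star_add, star_one]; noncomm_ring
  have e₂ : star (a + Complex.I • 1) * (a + Complex.I • 1)
      = star a * a + Complex.I • star a - Complex.I • a + 1 := by
    rw [star_add, star_smul, star_one, Complex.star_def, Complex.conj_I]
    simp only [add_mul, mul_add, smul_mul_assoc, mul_smul_comm, one_mul, mul_one]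
    match_scalars <;> simp
  rw [e₁, map_add, map_add, map_add, hψ.1] at h₁
  rw [e₂, map_add, map_sub, map_add, map_smul, map_smul, hψ.1] at h₂
  have h₀ := hψ.im_apply_star_mul_self a
  simp only [Complex.add_im, Complex.sub_im, Complex.one_im, smul_eq_mul, Complex.mul_im,
    Complex.I_re, Complex.I_im] at h₁ h₂
  apply Complex.ext <;> simp only [Complex.conj_re, Complex.conj_im] <;> linarith

lemma norm_apply_le_one [StarModule ℂ B] (hψ : IsState ψ) {a : B} (ha : star a * a = 1) :
    ‖ψ a‖ ≤ 1 := by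
  obtain ⟨r, hr₀, hr⟩ := hψ.2 (a - ψ a • 1)
  have e : star (a - ψ a • 1) * (a - ψ a • 1)
      = star a * a - ψ a • star a - conj (ψ a) • a + (conj (ψ a) * ψ a) • 1 := by
    rw [star_sub, star_smul, star_one, Complex.star_def]
    simp only [sub_mul, mul_sub, smul_mul_assoc, mul_smul_comm, one_mul, mul_one]
    module
  rw [e, ha, map_add, map_sub, map_sub, map_smul, map_smul, map_smul, hψ.1, hψ.map_star,
    smul_eq_mul, smul_eq_mul, smul_eq_mul, mul_one, Complex.conj_mul', Complex.mul_conj'] at hr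
  have : (1 - ‖ψ a‖ ^ 2 : ℝ) = r := by
    exact_mod_cast (by rw [← hr]; ring : (1 - ‖ψ a‖ ^ 2 : ℂ) = r)
  nlinarith [norm_nonneg (ψ a)]

end IsState

theorem IsOpen.exists_continuousMap_ne_zero_iff {X : Type*} [TopologicalSpace X]
    [TopologicalSpace.MetrizableSpace X] {V : Set X} (hV : IsOpen V) :
    ∃ f : C(X, ℂ), ∀ x, f x ≠ 0 ↔ x ∈ V := by
  let := TopologicalSpace.metrizableSpaceMetric X
  rcases Vᶜ.eq_empty_or_nonempty with hc | hc
  · exact ⟨1, fun x => by simp [Set.compl_empty_iff.mp hc]⟩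
  · refine ⟨⟨fun x => (Metric.infDist x Vᶜ : ℂ), by fun_prop⟩, fun x => ?_⟩
    rw [ne_eq, ContinuousMap.coe_mk, Complex.ofReal_eq_zero,
      ← Metric.mem_closure_iff_infDist_zero hc, hV.isClosed_compl.closure_eq, Set.notMem_compl_iff]

section

variable {X : Type*} [TopologicalSpace X] [MeasurableSpace X]

theorem ae_eq_zero_of_forall_integral_continuousMap_mul_eq_zero [CompactSpace X] [NormalSpace X]
    [BorelSpace X] {μ : Measure X} [IsFiniteMeasure μ] [μ.WeaklyRegular] {w : X → ℂ}
    (hw : MemLp w 2 μ)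
    (h : ∀ k : C(X, ℂ), ∫ x, k x * w x ∂μ = 0) : w =ᵐ[μ] 0 := by
  have hW : hw.toLp w = 0 := by
    refine (ContinuousMap.toLp_denseRange ℂ μ ℂ (p := 2) ENNReal.ofNat_ne_top)
      |>.eq_zero_of_inner_right ℂ fun k => ?_
    rw [L2.inner_def, ← h (star k)]
    refine integral_congr_ae ?_
    filter_upwards [ContinuousMap.coeFn_toLp (p := 2) (μ := μ) (𝕜 := ℂ) k, hw.coeFn_toLp]
      with x hk hwx
    rw [hk, hwx]
    simp [mul_comm]
  exact hw.coeFn_toLp.symm.trans (by rw [hW]; exact Lp.coeFn_zero ℂ 2 μ)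

theorem ae_imp_of_forall_isOpen_disjoint_preimage [SecondCountableTopology X] [T2Space X]
    (μ : Measure X) {T : X → X} (hT : Continuous T) {p : X → Prop}
    (hp : ∀ V, IsOpen V → Disjoint V (T ⁻¹' V) → ∀ᵐ x ∂μ, x ∈ V → p x) :
    ∀ᵐ x ∂μ, T x ≠ x → p x := by
  open TopologicalSpace in
  have hB := isBasis_countableBasis X
  have hV : ∀ᵐ x ∂μ, ∀ V ∈ {V ∈ countableBasis X | Disjoint V (T ⁻¹' V)}, x ∈ V → p x :=
    (ae_ball_iff ((countable_countableBasis X).mono (Set.sep_subset _ _))).2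
      fun V hV => hp V (hB.isOpen hV.1) hV.2
  filter_upwards [hV] with x hx hTx
  obtain ⟨W₁, W₂, hW₁, hW₂, hxW₁, hTxW₂, hW⟩ := t2_separation (Ne.symm hTx)
  obtain ⟨V, hVB, hxV, hVW⟩ :=
    hB.exists_subset_of_mem_open (show x ∈ W₁ ∩ T ⁻¹' W₂ from ⟨hxW₁, hTxW₂⟩)
      (hW₁.inter (hW₂.preimage hT))
  exact hx V ⟨hVB, Set.disjoint_left.2 fun y hy hTy => hW.ne_of_mem (hVW hTy).1 (hVW hy).2 rfl⟩
    hxV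

theorem ae_mem_imp_eq_zero_of_integral_mul_comp_eq [CompactSpace X]
    [TopologicalSpace.MetrizableSpace X] [BorelSpace X] {μ : Measure X} [IsFiniteMeasure μ]
    {T : X → X} {h : X → ℂ} (hh : MemLp h 2 μ)
    (hT : ∀ f₁ f₂ : C(X, ℂ), ∫ x, f₁ x * f₂ (T x) * h x ∂μ = ∫ x, f₁ x * f₂ x * h x ∂μ)
    {V : Set X} (hV : IsOpen V) (hVT : Disjoint V (T ⁻¹' V)) : ∀ᵐ x ∂μ, x ∈ V → h x = 0 := by
  obtain ⟨f, hf⟩ := hV.exists_continuousMap_ne_zero_iff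
  have hfT : ∀ x, f x * f (T x) = 0 := fun x => by
    by_contra hx
    obtain ⟨h₁, h₂⟩ := mul_ne_zero_iff.1 hx
    exact hVT.ne_of_mem ((hf x).1 h₁) ((hf (T x)).1 h₂) rfl
  have hw : MemLp (fun x => f x * f x * h x) 2 μ := by
    refine hh.of_le_mul (c := ‖f‖ * ‖f‖) ((f * f).continuous.aestronglyMeasurable.mul hh.1) ?_
    filter_upwards with x
    rw [norm_mul, norm_mul]
    gcongr <;> exact f.norm_coe_le_norm x
  have hint : ∀ k : C(X, ℂ), ∫ x, k x * (f x * f x * h x) ∂μ = 0 := fun k =>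
    calc ∫ x, k x * (f x * f x * h x) ∂μ = ∫ x, (k * f) x * f x * h x ∂μ := by
          simp only [ContinuousMap.mul_apply, mul_assoc]
      _ = ∫ x, (k * f) x * f (T x) * h x ∂μ := (hT _ _).symm
      _ = 0 := by simp [mul_assoc, hfT]
  filter_upwards [ae_eq_zero_of_forall_integral_continuousMap_mul_eq_zero hw hint] with x hx hxV
  simpa [(hf x).2 hxV] using hx

theorem integral_mul_comp_mul_eq_of_covariant {A F : Type*} [Monoid A] [FunLike F C(X, ℂ) A]
    [MulHomClass F C(X, ℂ) A] (ι : F) (φ : A → ℂ) (u : A) (T : C(X, X)) (μ : Measure X)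
    (h : X → ℂ) (hcov : ∀ f, ι (f.comp T) * u = u * ι f)
    (hcen : ∀ f a, φ (ι f * a) = φ (a * ι f)) (hdis : ∀ f, φ (ι f * u) = ∫ x, f x * h x ∂μ)
    (f₁ f₂ : C(X, ℂ)) : ∫ x, f₁ x * f₂ (T x) * h x ∂μ = ∫ x, f₁ x * f₂ x * h x ∂μ :=
  calc ∫ x, f₁ x * f₂ (T x) * h x ∂μ = φ (ι (f₁ * f₂.comp T) * u) := by rw [hdis]; rfl
    _ = φ (ι f₂ * (ι f₁ * u)) := by
      rw [map_mul, mul_assoc, hcov, ← mul_assoc]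
      exact (hcen f₂ _).symm
    _ = ∫ x, f₁ x * f₂ x * h x ∂μ := by
      rw [← mul_assoc, ← map_mul, hdis, mul_comm f₂]; rfl

end

theorem disintegration_supported_on_stabilizers_general
    {G : Type*} [Group G]
    {X : Type*} [TopologicalSpace X] [CompactSpace X]
    [TopologicalSpace.MetrizableSpace X] [MeasurableSpace X] [BorelSpace X] [MulAction G X]
    (hcont : ∀ g : G, Continuous fun x : X => g • x)
    {A : Type*} [NormedRing A] [StarRing A] [NormedAlgebra ℂ A]
    (ι : C(X, ℂ) →⋆ₐ[ℂ] A) (u : G → A)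
    (hu_mul : ∀ g h : G, u g * u h = u (g * h)) (hu_one : u 1 = 1)
    (hu_star : ∀ g : G, star (u g) = u g⁻¹)
    (hcov : ∀ (g : G) (f : C(X, ℂ)),
      u g * ι f * star (u g) = ι ⟨fun x => f (g⁻¹ • x), f.continuous.comp (hcont g⁻¹)⟩)
    -- the full group C*-algebra with its generators and the canonical map to `A`
    {CG : Type*} [NormedRing CG] [StarRing CG] [NormedAlgebra ℂ CG] [StarModule ℂ CG]
    (lam : G → CG)
    (hlam_mul : ∀ g h : G, lam g * lam h = lam (g * h)) (hlam_one : lam 1 = 1)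
    (hlam_star : ∀ g : G, star (lam g) = lam g⁻¹)
    (j : CG →⋆ₐ[ℂ] A) (hj : ∀ g : G, j (lam g) = u g)
    -- the state `φ` with centralizer containing `C(X)`
    (φ : A →ₗ[ℂ] ℂ)
    (hcen : ∀ (f : C(X, ℂ)) (a : A), φ (ι f * a) = φ (a * ι f))
    -- the disintegration `Φ = ∫⊕ φ_x dν(x)` of the induced state on `C(X) ⊗ C*(G)`
    (ν : Measure X) [IsProbabilityMeasure ν]
    (φx : X → (CG →ₗ[ℂ] ℂ))
    (hφx_state : ∀ x : X, IsState (φx x))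
    (hφx_meas : ∀ a : CG, Measurable fun x : X => φx x a)
    (hdis : ∀ (f : C(X, ℂ)) (a : CG), φ (ι f * j a) = ∫ x, f x * φx x a ∂ν) :
    ∀ g : G, ∀ᵐ x ∂ν, g • x ≠ x → φx x (lam g) = 0 := by
  intro g
  let T : C(X, X) := ⟨(g⁻¹ • ·), hcont g⁻¹⟩
  have hcovT (f : C(X, ℂ)) : ι (f.comp T) * u g = u g * ι f :=
    calc ι (f.comp T) * u g = u g * ι f * star (u g) * u g := by rw [hcov]; rfl
      _ = u g * ι f := by rw [mul_assoc, hu_star, hu_mul, inv_mul_cancel, hu_one, mul_one]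
  have hL2 : MemLp (fun x => φx x (lam g)) 2 ν := by
    refine MemLp.of_bound (hφx_meas _).aestronglyMeasurable 1 (ae_of_all _ fun x => ?_)
    exact (hφx_state x).norm_apply_le_one (by rw [hlam_star, hlam_mul, inv_mul_cancel, hlam_one])
  have hT := integral_mul_comp_mul_eq_of_covariant ι φ (u g) T ν _ hcovT hcen
    fun f => by rw [← hj, hdis]
  filter_upwards [ae_imp_of_forall_isOpen_disjoint_preimage ν T.continuous
    fun V hV hVT => ae_mem_imp_eq_zero_of_integral_mul_comp_eq hL2 hT hV hVT] with x hx hgx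
  exact hx fun hTx => hgx (inv_smul_eq_iff.1 hTx).symm

/-- Let a countable group `G` act by homeomorphisms on a metrizable compact space `X`,
let `A = C(X) ⋊ G` be the full crossed product (with embedding `ι` and unitaries `u g`),
let `CG = C*(G)` be the full group C*-algebra with generators `lam g` and canonical map
`j : C*(G) → C(X) ⋊ G`, `j(λ_g) = u_g`.  Let `φ` be a state on `A` whose centralizer
contains `C(X)`, and let `Φ = ∫⊕ φ_x dν(x)` be the disintegration over `C(X)` of the
induced state on `C(X) ⊗ C*(G)`, i.e. `φ(ι f · j a) = ∫ f(x) φ_x(a) dν(x)`.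
Then for every `g ∈ G`, `φ_x(λ_g) = 0` for `ν`-almost every `x` not fixed by `g`. -/
theorem disintegration_supported_on_stabilizers
    {G : Type*} [Group G] [Countable G]
    {X : Type*} [TopologicalSpace X] [CompactSpace X] [T2Space X]
    [TopologicalSpace.MetrizableSpace X] [MeasurableSpace X] [BorelSpace X] [MulAction G X]
    (hcont : ∀ g : G, Continuous fun x : X => g • x)
    {A : Type*} [NormedRing A] [StarRing A] [CStarRing A] [NormedAlgebra ℂ A]
    [CompleteSpace A] [StarModule ℂ A]
    (ι : C(X, ℂ) →⋆ₐ[ℂ] A) (u : G → A)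
    (hu_mul : ∀ g h : G, u g * u h = u (g * h)) (hu_one : u 1 = 1)
    (hu_star : ∀ g : G, star (u g) = u g⁻¹)
    (hcov : ∀ (g : G) (f : C(X, ℂ)),
      u g * ι f * star (u g) = ι ⟨fun x => f (g⁻¹ • x), f.continuous.comp (hcont g⁻¹)⟩)
    -- the full group C*-algebra with its generators and the canonical map to `A`
    {CG : Type*} [NormedRing CG] [StarRing CG] [CStarRing CG] [NormedAlgebra ℂ CG]
    [CompleteSpace CG] [StarModule ℂ CG]
    (lam : G → CG)
    (hlam_mul : ∀ g h : G, lam g * lam h = lam (g * h)) (hlam_one : lam 1 = 1)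
    (hlam_star : ∀ g : G, star (lam g) = lam g⁻¹)
    (j : CG →⋆ₐ[ℂ] A) (hj : ∀ g : G, j (lam g) = u g)
    -- the state `φ` with centralizer containing `C(X)`
    (φ : A →ₗ[ℂ] ℂ) (hφ : IsState φ)
    (hcen : ∀ (f : C(X, ℂ)) (a : A), φ (ι f * a) = φ (a * ι f))
    -- the disintegration `Φ = ∫⊕ φ_x dν(x)` of the induced state on `C(X) ⊗ C*(G)`
    (ν : Measure X) [IsProbabilityMeasure ν]
    (φx : X → (CG →ₗ[ℂ] ℂ))
    (hφx_state : ∀ x : X, IsState (φx x))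
    (hφx_meas : ∀ a : CG, Measurable fun x : X => φx x a)
    (hdis : ∀ (f : C(X, ℂ)) (a : CG), φ (ι f * j a) = ∫ x, f x * φx x a ∂ν) :
    ∀ g : G, ∀ᵐ x ∂ν, g • x ≠ x → φx x (lam g) = 0 :=
  disintegration_supported_on_stabilizers_general hcont ι u hu_mul hu_one hu_star hcov lam hlam_mul
    hlam_one hlam_star j hj φ hcen ν φx hφx_state hφx_meas hdis
end

section
/- Let G be a discrete abelian group, H ≤ G a subgroup with annihilator H⊥ = {χ ∈ Ĝ : χ(h) = 1 for all h ∈ H}, and λ a finite regular Borel measure on the compact dual group Ĝ. Then ∫_{Ĝ} χ(g) dλ(χ) = 0 for all g ∈ G \ H if and only if λ is invariant under translation by every element of H⊥. -/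
/-!
Translating `λ` by `χ₀` multiplies its Fourier coefficient `∫ χ(g) dλ(χ)` by `χ₀(g)`.
If `λ` is `H⊥`-invariant and `g ∉ H`, pick `χ₀ ∈ H⊥` with `χ₀(g) ≠ 1` (characters of the
abelian group `G ⧸ H` separate points, since `ℚ ⧸ ℤ` embeds in the circle); then the coefficient
at `g` equals `χ₀(g)` times itself, hence vanishes. Conversely, if the coefficients vanish off `H`,
then `λ` and its translate by any `χ₀ ∈ H⊥` have the same Fourier coefficients. By
Stone–Weierstrass the functions `χ ↦ χ(g)` span a dense subspace of `C(Ĝ, ℂ)`, so the two measures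
integrate all continuous functions alike, and regular measures are determined by that.
-/

open MeasureTheory

namespace ContinuousMap

variable {X E : Type*} [TopologicalSpace X] [CompactSpace X] [MeasurableSpace X] [BorelSpace X]
  [NormedAddCommGroup E] [NormedSpace ℝ E] [CompleteSpace E] [SecondCountableTopologyEither X E]
  (𝕜 : Type*) [NontriviallyNormedField 𝕜] [NormedSpace 𝕜 E] [SMulCommClass ℝ 𝕜 E]
  (μ : Measure X) [IsFiniteMeasure μ]

noncomputable def integralCLM : C(X, E) →L[𝕜] E :=
  (L1.integralCLM' 𝕜).comp (toLp 1 μ 𝕜)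

theorem integralCLM_apply (f : C(X, E)) : integralCLM 𝕜 μ f = ∫ x, f x ∂μ := by
  rw [integralCLM, ContinuousLinearMap.comp_apply, ← L1.integral_eq', L1.integral_eq_integral]
  exact integral_congr_ae (coeFn_toLp μ f)

end ContinuousMap

theorem MeasureTheory.Measure.ext_of_integral_eq_on_dense_span {X : Type*} [TopologicalSpace X]
    [CompactSpace X] [T2Space X] [MeasurableSpace X] [BorelSpace X] {μ ν : Measure X}
    [μ.Regular] [ν.Regular] {s : Set C(X, ℂ)} (hs : Dense (Submodule.span ℂ s : Set C(X, ℂ)))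
    (h : ∀ f ∈ s, ∫ x, f x ∂μ = ∫ x, f x ∂ν) : μ = ν := by
  have hCLM : ContinuousMap.integralCLM ℂ μ = ContinuousMap.integralCLM ℂ ν :=
    ContinuousLinearMap.ext_on hs fun f hf => by
      simp only [ContinuousMap.integralCLM_apply, h f hf]
  refine Measure.ext_of_integral_eq_on_compactlySupported fun f => Complex.ofReal_injective ?_
  have := congr($hCLM ⟨fun x => (f x : ℂ), by fun_prop⟩)
  simpa only [ContinuousMap.integralCLM_apply, ContinuousMap.coe_mk, integral_complex_ofReal]
    using this

namespace AddCircle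

noncomputable def ratToCircle : AddCircle (1 : ℚ) →+ Additive Circle :=
  (toCircle_addChar (T := 1)).toAddMonoidHom.comp <|
    QuotientAddGroup.map _ _ (Rat.castHom ℝ).toAddMonoidHom <|
      AddSubgroup.zmultiples_le.mpr (by simp)

theorem injective_ratToCircle : Function.Injective ratToCircle := by
  refine (injective_iff_map_eq_zero _).mpr fun x hx => ?_
  induction x using QuotientAddGroup.induction_on with
  | H q =>
    have hq : ((q : ℝ) : AddCircle (1 : ℝ)) = 0 :=
      injective_toCircle one_ne_zero (hx.trans toCircle_zero.symm)
    obtain ⟨n, hn⟩ := (coe_eq_zero_iff _).mp hq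
    exact (coe_eq_zero_iff _).mpr ⟨n, by rw [zsmul_one] at hn ⊢; exact_mod_cast hn⟩

end AddCircle

theorem CommGroup.exists_monoidHom_circle_apply_ne_one {Q : Type*} [CommGroup Q] {a : Q}
    (ha : a ≠ 1) : ∃ φ : Q →* Circle, φ a ≠ 1 := by
  obtain ⟨c, hc⟩ := CharacterModule.exists_character_apply_ne_zero_of_ne_zero
    (A := Additive Q) (a := Additive.ofMul a) ha
  refine ⟨MonoidHom.toAdditive.symm (AddCircle.ratToCircle.comp c), fun h => hc ?_⟩
  exact AddCircle.injective_ratToCircle (h.trans (map_zero AddCircle.ratToCircle).symm)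

namespace PontryaginDual

theorem exists_apply_ne_one_of_notMem {G : Type*} [CommGroup G] [TopologicalSpace G]
    [DiscreteTopology G] (H : Subgroup G) {g : G} (hg : g ∉ H) :
    ∃ χ : PontryaginDual G, (∀ h ∈ H, χ h = 1) ∧ χ g ≠ 1 := by
  obtain ⟨φ, hφ⟩ := CommGroup.exists_monoidHom_circle_apply_ne_one
    (mt (QuotientGroup.eq_one_iff (N := H) g).mp hg)
  refine ⟨⟨φ.comp (QuotientGroup.mk' H), continuous_of_discreteTopology⟩, fun h hh => ?_, hφ⟩
  change φ (h : G ⧸ H) = 1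
  rw [(QuotientGroup.eq_one_iff h).mpr hh, _root_.map_one]

section Monoid

variable {G : Type*} [Monoid G] [TopologicalSpace G]

noncomputable def evalChar : G →* C(PontryaginDual G, ℂ) where
  toFun g := ⟨fun χ => χ g,
    continuous_subtype_val.comp (continuous_eval_const (F := G →ₜ* Circle) g)⟩
  map_one' := by ext; simp
  map_mul' g g' := by ext; simp

@[simp]
theorem evalChar_apply (g : G) (χ : PontryaginDual G) : evalChar g χ = χ g := rfl

theorem integral_apply_map_mul_left [MeasurableSpace (PontryaginDual G)]
    [BorelSpace (PontryaginDual G)] (μ : Measure (PontryaginDual G)) (χ₀ : PontryaginDual G)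
    (g : G) : ∫ χ, (χ g : ℂ) ∂μ.map (χ₀ * ·) = χ₀ g * ∫ χ, (χ g : ℂ) ∂μ := by
  have hmeas : AEStronglyMeasurable (fun χ : PontryaginDual G => (χ g : ℂ)) (μ.map (χ₀ * ·)) :=
    (evalChar g).continuous.aestronglyMeasurable
  rw [integral_map (continuous_const_mul χ₀).aemeasurable hmeas, ← integral_const_mul]
  rfl

end Monoid

section Group

variable {G : Type*} [Group G] [TopologicalSpace G]

theorem star_evalChar (g : G) : star (evalChar g) = evalChar g⁻¹ := by
  ext χ
  simp [← Circle.coe_inv_eq_conj]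

noncomputable def evalSubalgebra : StarSubalgebra ℂ C(PontryaginDual G, ℂ) where
  toSubalgebra := Algebra.adjoin ℂ (Set.range evalChar)
  star_mem' := by
    change Algebra.adjoin ℂ _ ≤ star (Algebra.adjoin ℂ _)
    refine Algebra.adjoin_le ?_
    rintro - ⟨g, rfl⟩
    exact Algebra.subset_adjoin ⟨g⁻¹, (star_evalChar g).symm⟩

theorem evalSubalgebra_toSubmodule :
    Subalgebra.toSubmodule (evalSubalgebra (G := G)).toSubalgebra =
      Submodule.span ℂ (Set.range evalChar) := by
  rw [evalSubalgebra, Algebra.adjoin_eq_span, MonoidHom.mclosure_range, MonoidHom.coe_mrange]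

theorem evalSubalgebra_separatesPoints : (evalSubalgebra (G := G)).SeparatesPoints := by
  intro χ χ' hne
  obtain ⟨g, hg⟩ := DFunLike.ne_iff.mp hne
  exact ⟨_, ⟨evalChar g, Algebra.subset_adjoin ⟨g, rfl⟩, rfl⟩, by simpa [Circle.coe_inj] using hg⟩

variable [CompactSpace (PontryaginDual G)]

theorem dense_span_range_evalChar :
    Dense (Submodule.span ℂ (Set.range (evalChar (G := G))) : Set C(PontryaginDual G, ℂ)) := by
  rw [← evalSubalgebra_toSubmodule, dense_iff_closure_eq]
  have := ContinuousMap.starSubalgebra_topologicalClosure_eq_top_of_separatesPoints _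
    (evalSubalgebra_separatesPoints (G := G))
  exact congr(($this : Set C(PontryaginDual G, ℂ)))

theorem measure_ext_of_integral_apply_eq [MeasurableSpace (PontryaginDual G)]
    [BorelSpace (PontryaginDual G)] {μ ν : Measure (PontryaginDual G)} [μ.Regular] [ν.Regular]
    (h : ∀ g : G, ∫ χ, (χ g : ℂ) ∂μ = ∫ χ, (χ g : ℂ) ∂ν) : μ = ν :=
  Measure.ext_of_integral_eq_on_dense_span dense_span_range_evalChar <| by
    rintro - ⟨g, rfl⟩
    exact h g

end Group

end PontryaginDual

open PontryaginDual in
theorem fourier_vanishing_iff_annihilator_invariant_general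
    {G : Type*} [CommGroup G] [TopologicalSpace G] [DiscreteTopology G]
    (H : Subgroup G)
    [MeasurableSpace (PontryaginDual G)] [BorelSpace (PontryaginDual G)]
    (lam : Measure (PontryaginDual G)) [lam.Regular] :
    (∀ g : G, g ∉ H → ∫ χ : PontryaginDual G, (χ g : ℂ) ∂lam = 0) ↔
      (∀ χ₀ : PontryaginDual G, (∀ h : G, h ∈ H → χ₀ h = 1) →
        Measure.map (fun χ : PontryaginDual G => χ₀ * χ) lam = lam) := by
  constructor
  · intro hvanish χ₀ hχ₀
    have : (lam.map (χ₀ * ·)).Regular := Measure.Regular.map (Homeomorph.mulLeft χ₀)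
    refine measure_ext_of_integral_apply_eq fun g => ?_
    rw [integral_apply_map_mul_left]
    by_cases hg : g ∈ H
    · simp [hχ₀ g hg]
    · simp [hvanish g hg]
  · intro hinv g hg
    obtain ⟨χ₀, hχ₀H, hχ₀g⟩ := exists_apply_ne_one_of_notMem H hg
    have hfixed := integral_apply_map_mul_left lam χ₀ g
    rw [hinv χ₀ hχ₀H, eq_comm, mul_left_eq_self₀] at hfixed
    exact hfixed.resolve_left (mt Circle.coe_eq_one.mp hχ₀g)

/-- Let `G` be a discrete abelian group, `H ≤ G` a subgroup with annihilator
`H⊥ = {χ ∈ Ĝ : χ(h) = 1 for all h ∈ H}` in the Pontryagin dual `Ĝ`, and `λ` a finite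
regular Borel measure on `Ĝ`.  Then `∫_{Ĝ} χ(g) dλ(χ) = 0` for all `g ∈ G \ H` if and
only if `λ` is invariant under translation by every element of `H⊥`. -/
theorem fourier_vanishing_iff_annihilator_invariant
    {G : Type*} [CommGroup G] [TopologicalSpace G] [DiscreteTopology G]
    (H : Subgroup G)
    [MeasurableSpace (PontryaginDual G)] [BorelSpace (PontryaginDual G)]
    (lam : Measure (PontryaginDual G)) [IsFiniteMeasure lam] [lam.Regular] :
    (∀ g : G, g ∉ H → ∫ χ : PontryaginDual G, (χ g : ℂ) ∂lam = 0) ↔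
      (∀ χ₀ : PontryaginDual G, (∀ h : G, h ∈ H → χ₀ h = 1) →
        Measure.map (fun χ : PontryaginDual G => χ₀ * χ) lam = lam) :=
  fourier_vanishing_iff_annihilator_invariant_general H lam
end

section
/- Let G be a countable group acting on a compact metrizable space X and φ a state on C(X) ⋊ G whose centralizer contains C(X). Then φ is tracial if and only if φ(u_g f u_h u_g*) = φ(f u_h) for all f ∈ C(X) and g, h ∈ G; equivalently, the associated state Φ on C(X) ⊗ C*(G) (with Φ(f ⊗ λ_h) = φ(f u_h)) is invariant under the action α of G given by α_g(f ⊗ a) = f(g⁻¹·) ⊗ λ_g a λ_g*. -/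
/-- A tracial functional. -/
def IsTracial {A : Type*} [NormedRing A] [NormedAlgebra ℂ A] (φ : A →ₗ[ℂ] ℂ) : Prop :=
  ∀ a b : A, φ (a * b) = φ (b * a)

open scoped ComplexOrder

theorem continuous_of_map_star_mul_self_nonneg {A : Type*} [CStarAlgebra A] {φ : A →ₗ[ℂ] ℂ}
    (hφ : ∀ a : A, ∃ r : ℝ, 0 ≤ r ∧ φ (star a * a) = r) : Continuous φ := by
  let _ : PartialOrder A := CStarAlgebra.spectralOrder A
  have _ : StarOrderedRing A := CStarAlgebra.spectralOrderedRing A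
  have hpos : ∀ a : A, 0 ≤ a → 0 ≤ φ a := by
    intro a ha
    rw [StarOrderedRing.nonneg_iff] at ha
    induction ha using AddSubmonoid.closure_induction with
    | mem _ hx =>
      obtain ⟨s, rfl⟩ := hx
      obtain ⟨r, hr, hφs⟩ := hφ s
      rw [hφs]
      exact_mod_cast hr
    | zero => simp
    | add _ _ _ _ hx hy => rw [map_add]; exact add_nonneg hx hy
  -- positive maps between C⋆-algebras are bounded (`PositiveLinearMap.exists_norm_apply_le`)
  exact map_continuous (PositiveLinearMap.mk₀ φ hpos)

theorem IsTracial.apply_mul_mul_of_mul_eq_one {A : Type*} [NormedRing A] [NormedAlgebra ℂ A]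
    {φ : A →ₗ[ℂ] ℂ} (hφ : IsTracial φ) {u v : A} (hvu : v * u = 1) (a : A) :
    φ (u * a * v) = φ a := by
  rw [hφ, ← mul_assoc, hvu, one_mul]

theorem isTracial_of_dense_span {A : Type*} [NormedRing A] [NormedAlgebra ℂ A]
    {φ : A →ₗ[ℂ] ℂ} (hφ : Continuous φ) {S : Set A}
    (hS : Dense (Submodule.span ℂ S : Set A)) (h : ∀ a ∈ S, ∀ b ∈ S, φ (a * b) = φ (b * a)) :
    IsTracial φ := by
  have hspan : ∀ a ∈ Submodule.span ℂ S, ∀ b ∈ Submodule.span ℂ S, φ (a * b) = φ (b * a) :=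
    fun a ha b hb => Submodule.span_induction₂ (p := fun a b _ _ => φ (a * b) = φ (b * a))
      (fun a b ha hb => h a ha b hb) (by simp) (by simp)
      (by intros; simp [add_mul, mul_add, *]) (by intros; simp [add_mul, mul_add, *])
      (by intros; simp [*]) (by intros; simp [*]) ha hb
  intro a b
  have hext := Continuous.ext_on (hS.prod hS) (hφ.comp (continuous_fst.mul continuous_snd))
    (hφ.comp (continuous_snd.mul continuous_fst)) fun p hp => hspan _ hp.1 _ hp.2
  exact congrFun hext (a, b)

namespace ContinuousMap

variable {G X : Type*} [Group G] [TopologicalSpace X] [MulAction G X]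

noncomputable def shift (hcont : ∀ g : G, Continuous fun x : X => g • x) (g : G)
    (f : C(X, ℂ)) : C(X, ℂ) :=
  ⟨fun x => f (g⁻¹ • x), f.continuous.comp (hcont g⁻¹)⟩

variable {hcont : ∀ g : G, Continuous fun x : X => g • x}

theorem shift_mul (g : G) (f f' : C(X, ℂ)) :
    shift hcont g (f * f') = shift hcont g f * shift hcont g f' :=
  rfl

theorem shift_shift (g g' : G) (f : C(X, ℂ)) :
    shift hcont g (shift hcont g' f) = shift hcont (g * g') f := by
  ext x
  simp [shift, mul_smul]

end ContinuousMap

open ContinuousMap (shift shift_mul shift_shift)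

section Covariant

variable {G X A F : Type*} [Group G] [TopologicalSpace X] [MulAction G X] [Monoid A] [Star A]
  [FunLike F C(X, ℂ) A]

structure IsCovariantRep (hcont : ∀ g : G, Continuous fun x : X => g • x) (ι : F) (u : G → A) :
    Prop where
  mul : ∀ g h : G, u g * u h = u (g * h)
  one : u 1 = 1
  star_eq : ∀ g : G, star (u g) = u g⁻¹
  conj : ∀ (g : G) (f : C(X, ℂ)), u g * ι f * star (u g) = ι (shift hcont g f)

namespace IsCovariantRep

variable {hcont : ∀ g : G, Continuous fun x : X => g • x} {ι : F} {u : G → A}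

theorem star_mul_self (hρ : IsCovariantRep hcont ι u) (g : G) : star (u g) * u g = 1 := by
  rw [hρ.star_eq, hρ.mul, inv_mul_cancel, hρ.one]

theorem unit_mul (hρ : IsCovariantRep hcont ι u) (g : G) (f : C(X, ℂ)) :
    u g * ι f = ι (shift hcont g f) * u g := by
  rw [← hρ.conj, mul_assoc _ (star (u g)), hρ.star_mul_self, mul_one]

theorem unit_conj (hρ : IsCovariantRep hcont ι u) (f : C(X, ℂ)) (g h : G) :
    u g * ι f * u h * star (u g) = ι (shift hcont g f) * u (g * h * g⁻¹) := by
  rw [hρ.star_eq, hρ.unit_mul, mul_assoc _ (u g), hρ.mul, mul_assoc, hρ.mul, mul_assoc]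

theorem monomial_mul_monomial [MulHomClass F C(X, ℂ) A] (hρ : IsCovariantRep hcont ι u)
    (f f' : C(X, ℂ)) (g g' : G) :
    ι f * u g * (ι f' * u g') = ι (f * shift hcont g f') * u (g * g') := by
  rw [mul_assoc, ← mul_assoc (u g), hρ.unit_mul, map_mul, mul_assoc, mul_assoc, hρ.mul]

end IsCovariantRep

end Covariant

theorem IsCovariantRep.apply_monomial_mul_comm {G X A F : Type*} [Group G] [TopologicalSpace X]
    [MulAction G X] {hcont : ∀ g : G, Continuous fun x : X => g • x} [Semiring A] [Star A]
    [Module ℂ A] [FunLike F C(X, ℂ) A] [MulHomClass F C(X, ℂ) A] {ι : F} {u : G → A}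
    (hρ : IsCovariantRep hcont ι u) {φ : A →ₗ[ℂ] ℂ}
    (hcen : ∀ (f : C(X, ℂ)) (a : A), φ (ι f * a) = φ (a * ι f))
    (hinv : ∀ (f : C(X, ℂ)) (g h : G),
      φ (ι (shift hcont g f) * u (g * h * g⁻¹)) = φ (ι f * u h))
    (f f' : C(X, ℂ)) (g g' : G) :
    φ (ι f * u g * (ι f' * u g')) = φ (ι f' * u g' * (ι f * u g)) := by
  calc φ (ι f * u g * (ι f' * u g'))
      = φ (ι f * (ι (shift hcont g f') * u (g * g'))) := by
        rw [hρ.monomial_mul_monomial, map_mul ι, mul_assoc]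
    _ = φ (ι (shift hcont g f') * u (g * g') * ι f) := hcen _ _
    _ = φ (ι (shift hcont g (f' * shift hcont g' f)) * u (g * (g' * g) * g⁻¹)) := by
        rw [mul_assoc, hρ.unit_mul, ← mul_assoc, ← map_mul ι, shift_mul, shift_shift,
          ← mul_assoc g g' g, mul_inv_cancel_right]
    _ = φ (ι f' * u g' * (ι f * u g)) := by rw [hinv, hρ.monomial_mul_monomial]

theorem tracial_iff_alpha_invariant_general
    {G : Type*} [Group G]
    {X : Type*} [TopologicalSpace X] [MulAction G X]
    (hcont : ∀ g : G, Continuous fun x : X => g • x)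
    {A : Type*} [NormedRing A] [StarRing A] [CStarRing A] [NormedAlgebra ℂ A]
    [CompleteSpace A] [StarModule ℂ A]
    (ι : C(X, ℂ) →⋆ₐ[ℂ] A) (u : G → A)
    (hu_mul : ∀ g h : G, u g * u h = u (g * h)) (hu_one : u 1 = 1)
    (hu_star : ∀ g : G, star (u g) = u g⁻¹)
    (hcov : ∀ (g : G) (f : C(X, ℂ)),
      u g * ι f * star (u g) = ι ⟨fun x => f (g⁻¹ • x), f.continuous.comp (hcont g⁻¹)⟩)
    -- `A` is generated by `C(X)` and the unitaries `u g`
    (hgen : Dense (↑(Submodule.span ℂ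
      {a : A | ∃ (f : C(X, ℂ)) (g : G), a = ι f * u g}) : Set A))
    (φ : A →ₗ[ℂ] ℂ) (hφ : IsState φ)
    (hcen : ∀ (f : C(X, ℂ)) (a : A), φ (ι f * a) = φ (a * ι f)) :
    (IsTracial φ ↔
      ∀ (f : C(X, ℂ)) (g h : G),
        φ (u g * ι f * u h * star (u g)) = φ (ι f * u h)) ∧
    (IsTracial φ ↔
      ∀ (f : C(X, ℂ)) (g h : G),
        φ (ι ⟨fun x => f (g⁻¹ • x), f.continuous.comp (hcont g⁻¹)⟩ * u (g * h * g⁻¹)) =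
          φ (ι f * u h)) := by
  have hρ : IsCovariantRep hcont ι u := ⟨hu_mul, hu_one, hu_star, hcov⟩
  have hφ_cont : Continuous φ :=
    let _ : CStarAlgebra A := {}
    continuous_of_map_star_mul_self_nonneg hφ.2
  have conj_iff : (∀ (f : C(X, ℂ)) (g h : G),
        φ (u g * ι f * u h * star (u g)) = φ (ι f * u h)) ↔
      ∀ (f : C(X, ℂ)) (g h : G),
        φ (ι (shift hcont g f) * u (g * h * g⁻¹)) = φ (ι f * u h) := by
    simp only [hρ.unit_conj]
  have of_tracial (hτ : IsTracial φ) (f : C(X, ℂ)) (g h : G) :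
      φ (u g * ι f * u h * star (u g)) = φ (ι f * u h) := by
    rw [mul_assoc (u g) (ι f)]
    exact hτ.apply_mul_mul_of_mul_eq_one (hρ.star_mul_self g) _
  have to_tracial (hinv : ∀ (f : C(X, ℂ)) (g h : G),
      φ (ι (shift hcont g f) * u (g * h * g⁻¹)) = φ (ι f * u h)) :
      IsTracial φ := by
    refine isTracial_of_dense_span hφ_cont hgen ?_
    rintro _ ⟨f, g, rfl⟩ _ ⟨f', g', rfl⟩
    exact hρ.apply_monomial_mul_comm hcen hinv f f' g g'
  exact ⟨⟨of_tracial, to_tracial ∘ conj_iff.1⟩, ⟨conj_iff.1 ∘ of_tracial, to_tracial⟩⟩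

/-- Let a countable group `G` act on a compact metrizable space `X` and let `φ` be a
state on `C(X) ⋊ G` whose centralizer contains `C(X)`.  Then `φ` is tracial if and only
if `φ(u_g f u_h u_g*) = φ(f u_h)` for all `f ∈ C(X)` and `g, h ∈ G`; equivalently, the
associated state `Φ` on `C(X) ⊗ C*(G)` (determined by `Φ(f ⊗ λ_h) = φ(f u_h)`) is
invariant under the action `α_g(f ⊗ a) = f(g⁻¹·) ⊗ λ_g a λ_g*`, i.e.
`φ(f(g⁻¹·) u_{ghg⁻¹}) = φ(f u_h)` for all `f, g, h`. -/
theorem tracial_iff_alpha_invariant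
    {G : Type*} [Group G] [Countable G]
    {X : Type*} [TopologicalSpace X] [CompactSpace X]
    [TopologicalSpace.MetrizableSpace X] [MulAction G X]
    (hcont : ∀ g : G, Continuous fun x : X => g • x)
    {A : Type*} [NormedRing A] [StarRing A] [CStarRing A] [NormedAlgebra ℂ A]
    [CompleteSpace A] [StarModule ℂ A]
    (ι : C(X, ℂ) →⋆ₐ[ℂ] A) (u : G → A)
    (hu_mul : ∀ g h : G, u g * u h = u (g * h)) (hu_one : u 1 = 1)
    (hu_star : ∀ g : G, star (u g) = u g⁻¹)
    (hcov : ∀ (g : G) (f : C(X, ℂ)),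
      u g * ι f * star (u g) = ι ⟨fun x => f (g⁻¹ • x), f.continuous.comp (hcont g⁻¹)⟩)
    -- `A` is generated by `C(X)` and the unitaries `u g`
    (hgen : Dense (↑(Submodule.span ℂ
      {a : A | ∃ (f : C(X, ℂ)) (g : G), a = ι f * u g}) : Set A))
    (φ : A →ₗ[ℂ] ℂ) (hφ : IsState φ)
    (hcen : ∀ (f : C(X, ℂ)) (a : A), φ (ι f * a) = φ (a * ι f)) :
    (IsTracial φ ↔
      ∀ (f : C(X, ℂ)) (g h : G),
        φ (u g * ι f * u h * star (u g)) = φ (ι f * u h)) ∧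
    (IsTracial φ ↔
      ∀ (f : C(X, ℂ)) (g h : G),
        φ (ι ⟨fun x => f (g⁻¹ • x), f.continuous.comp (hcont g⁻¹)⟩ * u (g * h * g⁻¹)) =
          φ (ι f * u h)) :=
  tracial_iff_alpha_invariant_general hcont ι u hu_mul hu_one hu_star hcov hgen φ hφ hcen
end
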